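/- arXiv:1904.11351 — 4 statements merged into one kernel-verified Lean document; each statement's English description precedes it below -/
import Mathlib

section
/- Let d ≥ 2 and k be integers with 1 ≤ k ≤ d+1, and let β be a real number satisfying: β = (k + √(k(d+1)(d+2−k)))/(k(d+1−k)) or β = (k − √(k(d+1)(d+2−k)))/(k(d+1−k)) if 2 ≤ k ≤ d; β = 1 + 2/d if k = 1; and β = −(d+2)/(2(d+1)) if k = d+1. Then a point x ∈ H_d satisfies: x ∈ T_d(k,β) for some pair (k,β) obeying these conditions if and only if R_d ∪ {x} is a 2-distance set in H_d. -/
noncomputable section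

open scoped BigOperators Classical

/-- The set of Euclidean distances between distinct points of `X`. -/
def distSet {m : ℕ} (X : Set (EuclideanSpace ℝ (Fin m))) : Set ℝ :=
  {r | ∃ x ∈ X, ∃ y ∈ X, x ≠ y ∧ dist x y = r}

/-- `X` is a 2-distance set: exactly two distances occur between distinct points. -/
def IsTwoDistSet {m : ℕ} (X : Set (EuclideanSpace ℝ (Fin m))) : Prop :=
  (distSet X).ncard = 2

/-- The affine hyperplane `H_d = {x ∈ ℝ^{d+1} : ∑ x_i = 1}`. -/
def Hplane (d : ℕ) : Set (EuclideanSpace ℝ (Fin (d+1))) :=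
  {x | ∑ i, x i = 1}

/-- The regular simplex `R_d`: the standard basis vectors of `ℝ^{d+1}`. -/
def simplex (d : ℕ) : Set (EuclideanSpace ℝ (Fin (d+1))) :=
  Set.range (fun i => EuclideanSpace.single i (1:ℝ))

/-- The constant `c = (1 - (d+1-k)β)/(d+1)`. -/
def cval (d k : ℕ) (β : ℝ) : ℝ := (1 - ((d:ℝ) + 1 - (k:ℝ)) * β) / ((d:ℝ) + 1)

/-- The set `T_d(k,β)` of points of `H_d` all of whose coordinates lie in `{c, c+β}`,
with exactly `k` coordinates equal to `c`. -/
def Tset (d k : ℕ) (β : ℝ) : Set (EuclideanSpace ℝ (Fin (d+1))) :=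
  {x | x ∈ Hplane d ∧ (∀ i, x i = cval d k β ∨ x i = cval d k β + β) ∧
    {i | x i = cval d k β}.ncard = k}

/-- The condition of Proposition 1 on `β` (given `d` and `k`). -/
def betaCond (d k : ℕ) (β : ℝ) : Prop :=
  (k = 1 ∧ β = 1 + 2/(d:ℝ)) ∨
  (k = d + 1 ∧ β = -((d:ℝ)+2)/(2*((d:ℝ)+1))) ∨
  (2 ≤ k ∧ k ≤ d ∧
    (β = ((k:ℝ) + Real.sqrt ((k:ℝ)*((d:ℝ)+1)*((d:ℝ)+2-(k:ℝ))))/((k:ℝ)*((d:ℝ)+1-(k:ℝ))) ∨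
     β = ((k:ℝ) - Real.sqrt ((k:ℝ)*((d:ℝ)+1)*((d:ℝ)+2-(k:ℝ))))/((k:ℝ)*((d:ℝ)+1-(k:ℝ)))))

/-!
Since `‖x - e_i‖² = ‖x‖² + 1 - 2 x_i`, the distance from `x` to `e_i` determines and is
determined by the coordinate `x_i`. So `R_d ∪ {x}` is a 2-distance set exactly when `x ∉ R_d`
and either all coordinates of `x` agree (then `x` is the centroid, which is `T_d(d+1, β)` for
every `β`), or they take two values `c`, `c + β` and `‖x - e_j‖ = √2` where `x_j = c + β`.
For `x ∈ T_d(k, β)` the latter condition is `k(d+1-k)β² - 2kβ - (d+2) = 0`; its roots are the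
values of `β` in the statement, except `β = -1`, which for `k = 1` gives `x = e_i`.
-/

open Finset

section Single

variable {ι : Type*} [Fintype ι] [DecidableEq ι]

theorem EuclideanSpace.dist_single_one_sq (x : EuclideanSpace ℝ ι) (i : ι) :
    dist x (EuclideanSpace.single i 1) ^ 2 = ‖x‖ ^ 2 + 1 - 2 * x i := by
  rw [dist_eq_norm, norm_sub_sq_real, EuclideanSpace.inner_single_right, PiLp.norm_single]
  simp only [conj_trivial, one_mul, norm_one]
  ring

theorem EuclideanSpace.dist_single_one_sq_eq_iff {x : EuclideanSpace ℝ ι} {i j : ι} :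
    dist x (EuclideanSpace.single i 1) ^ 2 = dist x (EuclideanSpace.single j 1) ^ 2 ↔
      x i = x j := by
  rw [dist_single_one_sq, dist_single_one_sq]
  constructor <;> intro h <;> linarith

theorem EuclideanSpace.dist_single_one_single_one {i j : ι} (h : i ≠ j) :
    dist (EuclideanSpace.single i (1 : ℝ)) (EuclideanSpace.single j 1) = √2 := by
  rw [← Real.sqrt_sq dist_nonneg, dist_single_one_sq, PiLp.norm_single,
    PiLp.single_apply, if_neg h.symm]
  norm_num

theorem EuclideanSpace.dist_single_one_eq_sqrt_two_iff {x : EuclideanSpace ℝ ι} {i : ι} :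
    dist x (EuclideanSpace.single i 1) = √2 ↔ dist x (EuclideanSpace.single i 1) ^ 2 = 2 := by
  rw [← sq_eq_sq₀ dist_nonneg (Real.sqrt_nonneg 2), Real.sq_sqrt zero_le_two]

end Single

theorem Set.ncard_insert_eq_two_iff {α : Type*} {a : α} {s : Set α} :
    (insert a s).ncard = 2 ↔ ∃ b ≠ a, b ∈ s ∧ s ⊆ {a, b} := by
  constructor
  · intro h
    obtain ⟨p, q, hpq, hs⟩ := Set.ncard_eq_two.mp h
    have hsub : s ⊆ {p, q} := hs ▸ Set.subset_insert a s
    have hmem (b : α) (hb : b ∈ ({p, q} : Set α)) (hba : b ≠ a) : b ∈ s :=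
      (Set.mem_insert_iff.mp (hs ▸ hb)).resolve_left hba
    rcases (hs ▸ Set.mem_insert a s : a ∈ ({p, q} : Set α)) with rfl | rfl
    · exact ⟨q, hpq.symm, hmem q (by simp) hpq.symm, hsub⟩
    · exact ⟨p, hpq, hmem p (by simp) hpq, Set.pair_comm a p ▸ hsub⟩
  · rintro ⟨b, hba, hb, hs⟩
    rw [show insert a s = {a, b} from (Set.insert_subset (by simp) hs).antisymm
      (Set.insert_subset_insert (Set.singleton_subset_iff.mpr hb)), Set.ncard_pair hba.symm]

section Simplex

open EuclideanSpace

variable {d : ℕ}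

theorem sqrt_two_mem_distSet_simplex_union (hd : 1 ≤ d) (x : EuclideanSpace ℝ (Fin (d + 1))) :
    √2 ∈ distSet (simplex d ∪ {x}) := by
  have : NeZero d := ⟨by omega⟩
  have h01 : (0 : Fin (d + 1)) ≠ 1 := Fin.zero_ne_one'
  refine ⟨single 0 1, .inl ⟨0, rfl⟩, single 1 1, .inl ⟨1, rfl⟩, dist_pos.mp ?_,
    dist_single_one_single_one h01⟩
  rw [dist_single_one_single_one h01]
  positivity

theorem distSet_simplex_union_of_mem (hd : 1 ≤ d) {x : EuclideanSpace ℝ (Fin (d + 1))}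
    (hx : x ∈ simplex d) : distSet (simplex d ∪ {x}) = {√2} := by
  refine Set.eq_singleton_iff_unique_mem.mpr ⟨sqrt_two_mem_distSet_simplex_union hd x, ?_⟩
  rintro r ⟨p, hp, q, hq, hpq, rfl⟩
  rw [Set.union_singleton, Set.insert_eq_of_mem hx] at hp hq
  obtain ⟨i, rfl⟩ := hp
  obtain ⟨j, rfl⟩ := hq
  exact dist_single_one_single_one fun h => hpq (h ▸ rfl)

theorem distSet_simplex_union_of_notMem (hd : 1 ≤ d) {x : EuclideanSpace ℝ (Fin (d + 1))}
    (hx : x ∉ simplex d) :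
    distSet (simplex d ∪ {x}) = insert √2 (Set.range fun i => dist x (single i 1)) := by
  refine subset_antisymm ?_ (Set.insert_subset (sqrt_two_mem_distSet_simplex_union hd x) ?_)
  · rintro r ⟨p, hp | rfl, q, hq | rfl, hpq, rfl⟩
    · obtain ⟨i, rfl⟩ := hp
      obtain ⟨j, rfl⟩ := hq
      exact .inl (dist_single_one_single_one fun h => hpq (h ▸ rfl))
    · obtain ⟨i, rfl⟩ := hp
      exact .inr ⟨i, dist_comm _ _⟩
    · obtain ⟨j, rfl⟩ := hq
      exact .inr ⟨j, rfl⟩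
    · exact absurd rfl hpq
  · rintro r ⟨i, rfl⟩
    exact ⟨x, .inr rfl, single i 1, .inl ⟨i, rfl⟩, fun h => hx ⟨i, h.symm⟩, rfl⟩

theorem isTwoDistSet_simplex_union_iff (hd : 1 ≤ d) (x : EuclideanSpace ℝ (Fin (d + 1))) :
    IsTwoDistSet (simplex d ∪ {x}) ↔ ∃ s : ℝ, s ≠ 2 ∧ s ≠ 0 ∧
      (∃ i, dist x (single i 1) ^ 2 = s) ∧
      ∀ i, dist x (single i 1) ^ 2 = 2 ∨ dist x (single i 1) ^ 2 = s := by
  by_cases hx : x ∈ simplex d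
  · rw [IsTwoDistSet, distSet_simplex_union_of_mem hd hx, Set.ncard_singleton]
    obtain ⟨m, rfl⟩ := hx
    simp only [OfNat.one_ne_ofNat, false_iff, not_exists, not_and]
    intro s hs2 hs0 _ h
    have h₀ := h m
    rw [dist_self, zero_pow two_ne_zero] at h₀
    exact h₀.elim (by norm_num) hs0.symm
  rw [IsTwoDistSet, distSet_simplex_union_of_notMem hd hx, Set.ncard_insert_eq_two_iff]
  have hsq {i j : Fin (d + 1)} :
      dist x (single i 1) = dist x (single j 1) ↔
        dist x (single i 1) ^ 2 = dist x (single j 1) ^ 2 :=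
    (sq_eq_sq₀ dist_nonneg dist_nonneg).symm
  constructor
  · rintro ⟨r, hr, ⟨i, rfl⟩, hsub⟩
    refine ⟨dist x (single i 1) ^ 2, mt dist_single_one_eq_sqrt_two_iff.mpr hr,
      fun h => hx ⟨i, (dist_eq_zero.mp (pow_eq_zero_iff two_ne_zero |>.mp h)).symm⟩,
      ⟨i, rfl⟩, fun j => ?_⟩
    rw [← dist_single_one_eq_sqrt_two_iff, ← hsq]
    exact hsub ⟨j, rfl⟩
  · rintro ⟨_, hs2, -, ⟨i, rfl⟩, hvals⟩
    refine ⟨dist x (single i 1), mt dist_single_one_eq_sqrt_two_iff.mp hs2, ⟨i, rfl⟩, ?_⟩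
    rintro _ ⟨j, rfl⟩
    rw [Set.mem_insert_iff, Set.mem_singleton_iff, dist_single_one_eq_sqrt_two_iff, hsq]
    exact hvals j

end Simplex

theorem Finset.sum_comp_of_forall_eq_or_eq {ι : Type*} [Fintype ι] {x : ι → ℝ} {v w : ℝ}
    (h : ∀ i, x i = v ∨ x i = w) (f : ℝ → ℝ) :
    ∑ i, f (x i) = #{i | x i = v} * f v + (Fintype.card ι - #{i | x i = v}) * f w := by
  have hf (i : ι) : f (x i) = if x i = v then f v else f w := by
    split_ifs with hi
    · rw [hi]
    · rw [(h i).resolve_left hi]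
  rw [Finset.sum_congr rfl fun i _ => hf i, Finset.sum_ite, Finset.sum_const, Finset.sum_const,
    nsmul_eq_mul, nsmul_eq_mul, Finset.filter_not, Finset.card_sdiff_of_subset (filter_subset _ _),
    Finset.card_univ, Nat.cast_sub (card_le_univ _)]

section Tset

open EuclideanSpace

variable {d k : ℕ} {β : ℝ} {x : EuclideanSpace ℝ (Fin (d + 1))}

def betaQuadratic (d k : ℕ) (β : ℝ) : ℝ :=
  k * ((d : ℝ) + 1 - k) * β ^ 2 - 2 * k * β - ((d : ℝ) + 2)

theorem cval_eq_of_forall_eq_or_eq (hx : x ∈ Hplane d) {v w : ℝ} (h : ∀ i, x i = v ∨ x i = w) :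
    cval d #{i | x i = v} (w - v) = v := by
  have hsum := Finset.sum_comp_of_forall_eq_or_eq h id
  simp only [id, Fintype.card_fin, Nat.cast_add, Nat.cast_one] at hsum
  rw [cval, div_eq_iff (by positivity)]
  linear_combination hx.symm.trans hsum

theorem mem_Tset_of_forall_eq_or_eq (hx : x ∈ Hplane d) {v w : ℝ} (h : ∀ i, x i = v ∨ x i = w) :
    x ∈ Tset d #{i | x i = v} (w - v) := by
  refine ⟨hx, ?_, ?_⟩ <;> rw [cval_eq_of_forall_eq_or_eq hx h]
  · simpa using h
  · rw [Set.ncard_eq_toFinset_card', Set.toFinset_ofPred]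

theorem mem_Tset_succ_of_forall_eq (hx : x ∈ Hplane d) {v : ℝ} (h : ∀ i, x i = v) (β : ℝ) :
    x ∈ Tset d (d + 1) β := by
  have hT := mem_Tset_of_forall_eq_or_eq hx (w := v + β) fun i => .inl (h i)
  rwa [filter_true_of_mem fun i _ => h i, card_univ, Fintype.card_fin, add_sub_cancel_left] at hT

theorem dist_single_one_sq_of_mem_Tset (hx : x ∈ Tset d k β) (i : Fin (d + 1)) :
    dist x (single i 1) ^ 2 = 2 + 2 * (cval d k β + β - x i) + betaQuadratic d k β / (d + 1) := by
  obtain ⟨-, hvals, hk⟩ := hx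
  rw [Set.ncard_eq_toFinset_card', Set.toFinset_ofPred] at hk
  have hnorm : ‖x‖ ^ 2 = k * cval d k β ^ 2 + ((d : ℝ) + 1 - k) * (cval d k β + β) ^ 2 := by
    rw [EuclideanSpace.real_norm_sq_eq, Finset.sum_comp_of_forall_eq_or_eq hvals (· ^ 2), hk]
    simp
  rw [dist_single_one_sq, hnorm, betaQuadratic, cval]
  field_simp
  ring

end Tset

section BetaCond

variable {d k : ℕ} {β : ℝ}

theorem betaCond_one_iff (hd : 1 ≤ d) : betaCond d 1 β ↔ betaQuadratic d 1 β = 0 ∧ β ≠ -1 := by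
  have hd0 : (d : ℝ) ≠ 0 := by positivity
  have hfac : betaQuadratic d 1 β = (β + 1) * (d * β - (d + 2)) := by
    rw [betaQuadratic]; push_cast; ring
  have h1 : ¬(1 = d + 1) := by omega
  simp only [betaCond, true_and, h1, false_and, Nat.not_ofNat_le_one,
    or_false, hfac, mul_eq_zero, add_eq_zero_iff_eq_neg, sub_eq_zero]
  constructor
  · rintro rfl
    refine ⟨.inr (by field_simp), fun h => ?_⟩
    have : (0 : ℝ) < 2 / d := by positivity
    linarith
  · rintro ⟨h | h, hβ⟩
    · exact absurd h hβ
    · field_simp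
      linarith

theorem betaCond_iff_of_two_le (hk : 2 ≤ k) (hkd : k ≤ d) :
    betaCond d k β ↔ betaQuadratic d k β = 0 ∧ β ≠ -1 := by
  have hK : (2 : ℝ) ≤ k := by exact_mod_cast hk
  have hKd : (k : ℝ) ≤ d := by exact_mod_cast hkd
  set s := √((k : ℝ) * (d + 1) * (d + 2 - k))
  have hs : s * s = k * (d + 1) * (d + 2 - k) :=
    Real.mul_self_sqrt (mul_nonneg (by positivity) (by linarith))
  have ha : (k : ℝ) * (d + 1 - k) ≠ 0 := mul_ne_zero (by positivity) (by linarith)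
  have hroots := quadratic_eq_zero_iff ha (b := -2 * (k : ℝ)) (c := -((d : ℝ) + 2)) (s := 2 * s)
    (by rw [discrim]; linear_combination -4 * hs) β
  have hneg : betaQuadratic d k (-1) ≠ 0 := by
    rw [betaQuadratic]; nlinarith
  have hQ : betaQuadratic d k β = 0 ↔
      β = (k + s) / (k * (d + 1 - k)) ∨ β = (k - s) / (k * (d + 1 - k)) := by
    have e₁ : (-(-2 * (k : ℝ)) + 2 * s) / (2 * (k * (d + 1 - k))) =
        (k + s) / (k * (d + 1 - k)) := by field_simp
    have e₂ : (-(-2 * (k : ℝ)) - 2 * s) / (2 * (k * (d + 1 - k))) =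
        (k - s) / (k * (d + 1 - k)) := by field_simp
    rw [← e₁, ← e₂, ← hroots, betaQuadratic]
    constructor <;> intro h <;> linear_combination h
  have hk1 : ¬(k = 1) := by omega
  have hkd1 : ¬(k = d + 1) := by omega
  simp only [betaCond, hk1, hkd1, false_and, false_or, hk, hkd, true_and]
  exact ⟨fun h => ⟨hQ.mpr h, fun h1 => hneg (h1 ▸ hQ.mpr h)⟩, fun h => hQ.mp h.1⟩

theorem betaCond_iff (hk : 1 ≤ k) (hkd : k ≤ d) :
    betaCond d k β ↔ betaQuadratic d k β = 0 ∧ β ≠ -1 := by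
  obtain rfl | hk2 := hk.eq_or_lt
  · exact betaCond_one_iff hkd
  · exact betaCond_iff_of_two_le hk2 hkd

end BetaCond

section TwoDistance

open EuclideanSpace

variable {d k : ℕ} {β : ℝ} {x : EuclideanSpace ℝ (Fin (d + 1))}

theorem isTwoDistSet_of_mem_Tset_succ (hd : 1 ≤ d) (hx : x ∈ Tset d (d + 1) β) :
    IsTwoDistSet (simplex d ∪ {x}) := by
  have hc : ∀ i, x i = cval d (d + 1) β := by
    have h : {i | x i = cval d (d + 1) β} = Set.univ := by
      refine Set.eq_of_subset_of_ncard_le (Set.subset_univ _) ?_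
      rw [hx.2.2, Set.ncard_univ, Nat.card_eq_fintype_card, Fintype.card_fin]
    exact Set.eq_univ_iff_forall.mp h
  have hdist (i : Fin (d + 1)) : dist x (single i 1) ^ 2 = d / (d + 1) := by
    rw [dist_single_one_sq_of_mem_Tset hx, hc, betaQuadratic]
    field_simp
    push_cast
    ring
  have hd' : (1 : ℝ) ≤ d := by exact_mod_cast hd
  refine (isTwoDistSet_simplex_union_iff hd x).mpr ⟨d / (d + 1), ?_, by positivity, ⟨0, hdist 0⟩,
    fun i => .inr (hdist i)⟩
  rw [Ne, div_eq_iff (by positivity)]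
  linarith

theorem isTwoDistSet_of_mem_Tset (hd : 1 ≤ d) (hk : 1 ≤ k) (hQ : betaQuadratic d k β = 0)
    (hβ : β ≠ -1) (hx : x ∈ Tset d k β) : IsTwoDistSet (simplex d ∪ {x}) := by
  have hβ0 : β ≠ 0 := by
    rintro rfl
    rw [betaQuadratic] at hQ
    linarith [(d.cast_nonneg : (0 : ℝ) ≤ d)]
  obtain ⟨i₀, hi₀⟩ : {i | x i = cval d k β}.Nonempty :=
    Set.nonempty_of_ncard_ne_zero (by rw [hx.2.2]; omega)
  have hdist (i : Fin (d + 1)) :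
      dist x (single i 1) ^ 2 = 2 + 2 * (cval d k β + β - x i) := by
    rw [dist_single_one_sq_of_mem_Tset hx, hQ, zero_div, add_zero]
  refine (isTwoDistSet_simplex_union_iff hd x).mpr ⟨2 + 2 * β, ?_, ?_, ⟨i₀, ?_⟩, fun i => ?_⟩
  · simpa using hβ0
  · contrapose! hβ; linarith
  · rw [hdist, hi₀]; ring
  · rcases hx.2.1 i with h | h
    · right; rw [hdist, h]; ring
    · left; rw [hdist, h]; ring

theorem exists_mem_Tset_of_isTwoDistSet (hd : 1 ≤ d) (hx : x ∈ Hplane d)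
    (h : IsTwoDistSet (simplex d ∪ {x})) :
    ∃ k : ℕ, ∃ β : ℝ, 1 ≤ k ∧ k ≤ d + 1 ∧ betaCond d k β ∧ x ∈ Tset d k β := by
  obtain ⟨s, hs2, hs0, ⟨i₀, hi₀⟩, hvals⟩ := (isTwoDistSet_simplex_union_iff hd x).mp h
  by_cases hj : ∃ j, dist x (single j 1) ^ 2 = 2
  · obtain ⟨j₀, hj₀⟩ := hj
    have hxv (i : Fin (d + 1)) : x i = x i₀ ∨ x i = x j₀ := by
      rw [← dist_single_one_sq_eq_iff, ← dist_single_one_sq_eq_iff, hi₀, hj₀]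
      exact (hvals i).symm
    have hT := mem_Tset_of_forall_eq_or_eq hx hxv
    have hc := cval_eq_of_forall_eq_or_eq hx hxv
    have hi₀k : i₀ ∈ ({i | x i = x i₀} : Finset _) := by simp
    have hj₀k : j₀ ∉ ({i | x i = x i₀} : Finset _) := by
      simpa [← dist_single_one_sq_eq_iff, hi₀, hj₀] using hs2.symm
    have hdj₀ := dist_single_one_sq_of_mem_Tset hT j₀
    have hdi₀ := dist_single_one_sq_of_mem_Tset hT i₀
    rw [hc, hj₀] at hdj₀
    rw [hc, hi₀] at hdi₀
    have hk : 1 ≤ #{i | x i = x i₀} := card_pos.mpr ⟨i₀, hi₀k⟩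
    have hkd : #{i | x i = x i₀} ≤ d := by
      have := card_lt_univ_of_notMem hj₀k
      rwa [Fintype.card_fin, Nat.lt_succ_iff] at this
    have hd₁ : ((d : ℝ) + 1) ≠ 0 := by positivity
    have hQ₀ : betaQuadratic d #{i | x i = x i₀} (x j₀ - x i₀) = 0 :=
      (div_eq_zero_iff.mp (by linarith)).resolve_right hd₁
    refine ⟨_, _, hk, hkd.trans d.le_succ, (betaCond_iff hk hkd).mpr ⟨hQ₀, fun hβ => hs0 ?_⟩, hT⟩
    rw [hdi₀, hQ₀, hβ]
    ring
  · simp only [not_exists] at hj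
    have hconst (i : Fin (d + 1)) : x i = x i₀ :=
      dist_single_one_sq_eq_iff.mp (((hvals i).resolve_left (hj i)).trans hi₀.symm)
    exact ⟨d + 1, _, d.succ_pos, le_rfl, .inr (.inl ⟨rfl, rfl⟩),
      mem_Tset_succ_of_forall_eq hx hconst _⟩

end TwoDistance

theorem stmt0 (d : ℕ) (hd : 2 ≤ d) (x : EuclideanSpace ℝ (Fin (d+1))) (hx : x ∈ Hplane d) :
    (∃ k : ℕ, ∃ β : ℝ, 1 ≤ k ∧ k ≤ d + 1 ∧ betaCond d k β ∧ x ∈ Tset d k β) ↔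
      IsTwoDistSet (simplex d ∪ {x}) := by
  have hd₁ : 1 ≤ d := by omega
  refine ⟨?_, exists_mem_Tset_of_isTwoDistSet hd₁ hx⟩
  rintro ⟨k, β, hk, hkd, hβ, hxT⟩
  obtain rfl | hkd := hkd.eq_or_lt
  · exact isTwoDistSet_of_mem_Tset_succ hd₁ hxT
  · obtain ⟨hQ, hβ₁⟩ := (betaCond_iff hk (Nat.lt_succ_iff.mp hkd)).mp hβ
    exact isTwoDistSet_of_mem_Tset hd₁ hk hQ hβ₁ hxT
end
end

section
/- Let s ≥ 2 be an integer. There exist only finitely many triples (d, k, β), with d ≥ 2 and 1 ≤ k ≤ d+1 integers and β ≠ 0 real, such that there exists x ∈ T_d(k,β) for which R_d ∪ {x} is a 2-distance set with distances √2 and √α satisfying α/2 = (s−1)/s or 2/α = (s−1)/s (i.e., with LRS ratio s). -/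
noncomputable section

open scoped BigOperators Classical

lemma distsq {d : ℕ} (x : EuclideanSpace ℝ (Fin (d+1))) (i : Fin (d+1)) :
    dist x (EuclideanSpace.single i 1) ^ 2 = (∑ j, x j ^ 2) + 1 - 2 * x i := by
  rw [EuclideanSpace.dist_eq, Real.sq_sqrt (by positivity)]
  have h1 : ∀ j, dist (x j) (EuclideanSpace.single i (1:ℝ) j) ^ 2
      = x j ^ 2 - 2 * x j * (if j = i then (1:ℝ) else 0) + (if j = i then (1:ℝ) else 0)^2 := by
    intro j
    rw [Real.dist_eq, sq_abs, EuclideanSpace.single_apply]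
    ring
  rw [Finset.sum_congr rfl (fun j _ => h1 j)]
  rw [Finset.sum_add_distrib, Finset.sum_sub_distrib]
  have h2 : ∑ j, 2 * x j * (if j = i then (1:ℝ) else 0) = 2 * x i := by
    simp [Finset.sum_ite_eq', mul_comm]
  have h3 : ∑ j : Fin (d+1), (if j = i then (1:ℝ) else 0)^2 = 1 := by
    simp [Finset.sum_ite_eq']
  rw [h2, h3]
  ring

lemma sum_single_sq {d : ℕ} (i : Fin (d+1)) :
    ∑ j, (EuclideanSpace.single i (1:ℝ)) j ^ 2 = 1 := by
  simp [EuclideanSpace.single_apply, Finset.sum_ite_eq']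

lemma dist_single_single' {d : ℕ} {i j : Fin (d+1)} (hij : i ≠ j) :
    dist (EuclideanSpace.single i (1:ℝ)) (EuclideanSpace.single j 1) = Real.sqrt 2 := by
  have h := distsq (EuclideanSpace.single i (1:ℝ)) j
  rw [sum_single_sq] at h
  have hij' : EuclideanSpace.single i (1:ℝ) j = 0 := by
    rw [EuclideanSpace.single_apply]; simp [Ne.symm hij]
  rw [hij'] at h
  have h2 : dist (EuclideanSpace.single i (1:ℝ)) (EuclideanSpace.single j 1) ^ 2 = 2 := by
    rw [h]; ring
  rw [← Real.sqrt_sq dist_nonneg, h2]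

lemma intBound (s a b q : ℤ) (hs : 2 ≤ s) (hq : q = s ∨ q = 1 - s) (ha : 1 ≤ a)
    (hb : 1 ≤ b) (h : a*b + 2*a*q = q^2*(a+b+1)) : a + b ≤ 4*s^4 := by
  have hq1 : q ≤ -1 ∨ 2 ≤ q := by rcases hq with h'|h' <;> [right; left] <;> omega
  have hC : 1 ≤ q^2*(q-1)^2 := by
    rcases hq1 with h'|h' <;> nlinarith
  have h1 : a * (b + 2*q - q^2) = q^2*(b+1) := by linear_combination h
  have hrhs : 1 ≤ q^2*(b+1) := by nlinarith
  have ht : 1 ≤ b + 2*q - q^2 := by nlinarith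
  have h2 : (a - q^2)*(b + 2*q - q^2) = q^2*(q-1)^2 := by linear_combination h1
  have haq : 1 ≤ a - q^2 := by nlinarith
  have ht' : b + 2*q - q^2 ≤ q^2*(q-1)^2 := by nlinarith
  have ha' : a - q^2 ≤ q^2*(q-1)^2 := by nlinarith
  rcases hq with h'|h' <;> subst h' <;> nlinarith

lemma alg1 (N K c β Q : ℝ) (hN : N ≠ 0) (hNc : N * c = 1 - (N-K)*β)
    (hE : K*c^2 + (N-K)*(c+β)^2 + 1 - 2*c = 2) (hQ : β*Q = 1) :
    (N-K)*K + 2*(N-K)*Q = Q^2*((N-K)+K+1) := by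
  have FN : N*((N-K)*K*β^2 + 2*(N-K)*β) = N*(N+1) := by
    linear_combination N^2*hE - (N^2*c - N*(1-(N-K)*β))*hNc
  have F := mul_left_cancel₀ hN FN
  linear_combination Q^2*F - ((N-K)*K*(1+β*Q) + 2*(N-K)*Q)*hQ

lemma alg2 (N K c β P : ℝ) (hN : N ≠ 0) (hNc : N * c = 1 - (N-K)*β)
    (hE : K*c^2 + (N-K)*(c+β)^2 + 1 - 2*c - 2*β = 2) (hP : β*P = -1) :
    K*(N-K) + 2*K*P = P^2*(K+(N-K)+1) := by
  have FN : N*((N-K)*K*β^2 - 2*K*β) = N*(N+1) := by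
    linear_combination N^2*hE - (N^2*c - N*(1-(N-K)*β))*hNc
  have F := mul_left_cancel₀ hN FN
  linear_combination P^2*F + (K*(N-K)*(1-β*P) + 2*K*P)*hP


lemma mainBound (s d k : ℕ) (β α : ℝ) (x : EuclideanSpace ℝ (Fin (d+1)))
    (hs : 2 ≤ s) (hd2 : 2 ≤ d) (hk1 : 1 ≤ k) (hkd1 : k ≤ d+1) (hβ0 : β ≠ 0)
    (hx : x ∈ Tset d k β)
    (hdist : distSet (simplex d ∪ {x}) = {Real.sqrt 2, Real.sqrt α})
    (hα : α/2 = ((s:ℝ)-1)/(s:ℝ) ∨ 2/α = ((s:ℝ)-1)/(s:ℝ)) :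
    d ≤ 4*s^4 ∧ (β = ((s:ℝ))⁻¹ ∨ β = -((s:ℝ))⁻¹ ∨ β = ((s:ℝ)-1)⁻¹ ∨ β = -((s:ℝ)-1)⁻¹) := by
  obtain ⟨hxH, hxcoord, hxcount⟩ := hx
  have hsR : (2:ℝ) ≤ (s:ℝ) := by exact_mod_cast hs
  have hs0 : (s:ℝ) ≠ 0 := by linarith
  have hs10 : (s:ℝ) - 1 ≠ 0 := by linarith
  -- value of α
  have hαval : α = 2 - 2/(s:ℝ) ∨ α = 2 + 2/((s:ℝ)-1) := by
    rcases hα with h | h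
    · left
      field_simp at h ⊢
      linarith
    · right
      have hα0' : α ≠ 0 := by
        intro h0
        rw [h0, div_zero] at h
        have : (0:ℝ) < ((s:ℝ)-1)/(s:ℝ) := div_pos (by linarith) (by linarith)
        linarith
      field_simp at h ⊢
      linarith [h]
  have hα1 : 1 ≤ α := by
    rcases hαval with h | h <;> rw [h]
    · have h2s : 2/(s:ℝ) ≤ 1 := by rw [div_le_one (by linarith)]; linarith
      linarith
    · have : 0 < 2/((s:ℝ)-1) := div_pos (by norm_num) (by linarith)
      linarith
  have hα0 : (0:ℝ) ≤ α := by linarith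
  have hαne2 : α ≠ 2 := by
    rcases hαval with h | h <;> rw [h]
    · have : 0 < 2/(s:ℝ) := div_pos (by norm_num) (by linarith)
      intro hh; linarith
    · have : 0 < 2/((s:ℝ)-1) := div_pos (by norm_num) (by linarith)
      intro hh; linarith
  -- x is not a vertex of the simplex
  have hxns : x ∉ simplex d := by
    intro hxs
    have hOne : simplex d ∪ {x} = simplex d :=
      Set.union_eq_self_of_subset_right (Set.singleton_subset_iff.mpr hxs)
    rw [hOne] at hdist
    have hmem : Real.sqrt α ∈ distSet (simplex d) := by
      rw [hdist]; right; rfl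
    obtain ⟨p, hp, q, hq', hpq, hdq⟩ := hmem
    obtain ⟨i, rfl⟩ := hp
    obtain ⟨j, rfl⟩ := hq'
    have hij : i ≠ j := by rintro rfl; exact hpq rfl
    rw [dist_single_single' hij] at hdq
    have : (2:ℝ) = α := by
      have h2 := congrArg (fun t => t^2) hdq
      simpa [Real.sq_sqrt, hα0] using h2
    exact hαne2 this.symm
  -- distances from x to vertices
  have hdmem : ∀ i : Fin (d+1),
      dist x (EuclideanSpace.single i 1) ^ 2 = 2 ∨
      dist x (EuclideanSpace.single i 1) ^ 2 = α := by
    intro i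
    have hne : x ≠ EuclideanSpace.single i 1 := by
      intro h; exact hxns ⟨i, h.symm⟩
    have hmem : dist x (EuclideanSpace.single i 1) ∈ distSet (simplex d ∪ {x}) :=
      ⟨x, Or.inr rfl, EuclideanSpace.single i 1, Or.inl ⟨i, rfl⟩, hne, rfl⟩
    rw [hdist] at hmem
    rcases hmem with h | h
    · left; rw [h, Real.sq_sqrt]; norm_num
    · right; rw [h, Real.sq_sqrt hα0]
  -- counting
  have hScard : ({i | x i = cval d k β}.toFinset).card = k := by
    rw [← Set.ncard_eq_toFinset_card']; exact hxcount
  have hSc : ({i | x i = cval d k β}.toFinset)ᶜ.card = d + 1 - k := by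
    rw [Finset.card_compl, hScard]; simp
  have hA : ∑ j, x j ^ 2
      = (k:ℝ)*(cval d k β)^2 + ((d:ℝ)+1-(k:ℝ))*(cval d k β + β)^2 := by
    rw [← Finset.sum_add_sum_compl ({i | x i = cval d k β}.toFinset)]
    have h1 : ∑ j ∈ ({i | x i = cval d k β}.toFinset), x j ^ 2
        = (k:ℝ)*(cval d k β)^2 := by
      rw [Finset.sum_congr rfl (fun j hj => by
        have hxj : x j = cval d k β := by simpa using Set.mem_toFinset.mp hj
        rw [hxj])]
      rw [Finset.sum_const, hScard, nsmul_eq_mul]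
    have h2 : ∑ j ∈ ({i | x i = cval d k β}.toFinset)ᶜ, x j ^ 2
        = ((d:ℝ)+1-(k:ℝ))*(cval d k β + β)^2 := by
      have hco : ∀ j ∈ ({i | x i = cval d k β}.toFinset)ᶜ, x j = cval d k β + β := by
        intro j hj
        have hne : ¬ (x j = cval d k β) := by
          intro h
          exact (Finset.mem_compl.mp hj) (Set.mem_toFinset.mpr h)
        exact (hxcoord j).resolve_left hne
      rw [Finset.sum_congr rfl (fun j hj => by rw [hco j hj])]
      rw [Finset.sum_const, hSc, nsmul_eq_mul]
      congr 1
      push_cast [Nat.cast_sub hkd1]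
      ring
    rw [h1, h2]
  have hN0 : ((d:ℝ)+1) ≠ 0 := by positivity
  have hNc : ((d:ℝ)+1) * cval d k β = 1 - (((d:ℝ)+1) - (k:ℝ))*β := by
    unfold cval; field_simp
  -- exclude k = d+1
  have hkd : k ≤ d := by
    by_contra hkd'
    have hk' : k = d + 1 := by omega
    have hkr : (k:ℝ) = (d:ℝ)+1 := by rw [hk']; push_cast; ring
    have hSu : ({i | x i = cval d k β}.toFinset) = Finset.univ := by
      apply Finset.eq_univ_of_card
      rw [hScard, hk']; simp
    have hall : x 0 = cval d k β := by
      have := Finset.eq_univ_iff_forall.mp hSu 0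
      simpa using Set.mem_toFinset.mp this
    have hNc' : ((d:ℝ)+1) * cval d k β = 1 := by
      rw [hkr] at hNc; linear_combination hNc
    have hcpos : 0 < cval d k β := by nlinarith [hNc']
    have hcc : ((d:ℝ)+1)*(cval d k β)^2 = cval d k β := by
      have h' : ((d:ℝ)+1)*(cval d k β)^2 = cval d k β * (((d:ℝ)+1) * cval d k β) := by ring
      rw [h', hNc', mul_one]
    have hi := hdmem 0
    rw [distsq x 0, hA, hall] at hi
    rw [hkr] at hi
    rcases hi with h | h
    · have h' : ((d:ℝ)+1)*(cval d k β)^2 + 1 - 2*(cval d k β) = 2 := by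
        linear_combination h
      rw [hcc] at h'
      linarith
    · have h' : ((d:ℝ)+1)*(cval d k β)^2 + 1 - 2*(cval d k β) = α := by
        linear_combination h
      rw [hcc] at h'
      linarith
  -- both coordinate values occur
  obtain ⟨i₀, hi₀⟩ := Finset.card_pos.mp (by rw [hScard]; omega :
    0 < ({i | x i = cval d k β}.toFinset).card)
  obtain ⟨j₀, hj₀⟩ := Finset.card_pos.mp (by rw [hSc]; omega :
    0 < (({i | x i = cval d k β}.toFinset)ᶜ).card)
  have hxi₀ : x i₀ = cval d k β := by simpa using Set.mem_toFinset.mp hi₀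
  have hxj₀ : x j₀ = cval d k β + β := by
    have hne : ¬ (x j₀ = cval d k β) := by
      intro h
      exact (Finset.mem_compl.mp hj₀) (Set.mem_toFinset.mpr h)
    exact (hxcoord j₀).resolve_left hne
  have hD1 := hdmem i₀
  rw [distsq x i₀, hA, hxi₀] at hD1
  have hD2 := hdmem j₀
  rw [distsq x j₀, hA, hxj₀] at hD2
  -- the integer step
  have castgoal : ∀ a b : ℕ, ∀ q : ℤ, 1 ≤ a → 1 ≤ b → (q = (s:ℤ) ∨ q = 1 - (s:ℤ)) →
      a + b = d + 1 →
      (a:ℝ)*(b:ℝ) + 2*(a:ℝ)*((q:ℤ):ℝ) = ((q:ℤ):ℝ)^2*((a:ℝ)+(b:ℝ)+1) → d ≤ 4*s^4 := by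
    intro a b q ha hb hq hab heq
    have hsz : (2:ℤ) ≤ (s:ℤ) := by exact_mod_cast hs
    have heqz : (a:ℤ)*(b:ℤ) + 2*(a:ℤ)*q = q^2*((a:ℤ)+(b:ℤ)+1) := by exact_mod_cast heq
    have hbd := intBound (s:ℤ) (a:ℤ) (b:ℤ) q hsz hq (by exact_mod_cast ha)
      (by exact_mod_cast hb) heqz
    have habz : (a:ℤ) + (b:ℤ) = (d:ℤ) + 1 := by exact_mod_cast hab
    have : (d:ℤ) ≤ 4*(s:ℤ)^4 := by linarith
    exact_mod_cast this
  have hmcast : ((d+1-k : ℕ) : ℝ) = (d:ℝ)+1-(k:ℝ) := by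
    push_cast [Nat.cast_sub hkd1]; ring
  -- case analysis
  rcases hD1 with e1 | e1 <;> rcases hD2 with e2 | e2
  · exact absurd (by linarith : (2:ℝ)*β = 0) (by simpa using hβ0)
  · -- D1 = 2, D2 = α : β = (2-α)/2
    have hβα : 2*β = 2 - α := by linear_combination e1 - e2
    have hE : (k:ℝ)*(cval d k β)^2 + (((d:ℝ)+1)-(k:ℝ))*(cval d k β + β)^2 + 1
        - 2*(cval d k β) = 2 := by linear_combination e1
    rcases hαval with hv | hv
    · -- β = 1/s, Q = s
      have hQ : β * (s:ℝ) = 1 := by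
        rw [hv] at hβα
        field_simp at hβα ⊢
        linarith
      have T := alg1 ((d:ℝ)+1) (k:ℝ) (cval d k β) β (s:ℝ) hN0 hNc hE hQ
      refine ⟨castgoal (d+1-k) k (s:ℤ) (by omega) hk1 (Or.inl rfl) (by omega) ?_, ?_⟩
      · push_cast [Nat.cast_sub hkd1]
        push_cast at T
        linear_combination T
      · left
        field_simp
        linarith [hQ]
    · -- β = -1/(s-1), Q = 1-s
      have hQ : β * (1-(s:ℝ)) = 1 := by
        rw [hv] at hβα
        field_simp at hβα ⊢
        linarith
      have T := alg1 ((d:ℝ)+1) (k:ℝ) (cval d k β) β (1-(s:ℝ)) hN0 hNc hE hQ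
      refine ⟨castgoal (d+1-k) k (1-(s:ℤ)) (by omega) hk1 (Or.inr rfl) (by omega) ?_, ?_⟩
      · push_cast [Nat.cast_sub hkd1]
        push_cast at T ⊢
        linear_combination T
      · right; right; right
        field_simp
        linarith [hQ]
  · -- D1 = α, D2 = 2 : β = (α-2)/2
    have hβα : 2*β = α - 2 := by linear_combination e1 - e2
    have hE : (k:ℝ)*(cval d k β)^2 + (((d:ℝ)+1)-(k:ℝ))*(cval d k β + β)^2 + 1
        - 2*(cval d k β) - 2*β = 2 := by linear_combination e2
    rcases hαval with hv | hv
    · -- β = -1/s, P = s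
      have hP : β * (s:ℝ) = -1 := by
        rw [hv] at hβα
        field_simp at hβα ⊢
        linarith
      have T := alg2 ((d:ℝ)+1) (k:ℝ) (cval d k β) β (s:ℝ) hN0 hNc hE hP
      refine ⟨castgoal k (d+1-k) (s:ℤ) hk1 (by omega) (Or.inl rfl) (by omega) ?_, ?_⟩
      · push_cast [Nat.cast_sub hkd1]
        push_cast at T
        linear_combination T
      · right; left
        field_simp
        linarith [hP]
    · -- β = 1/(s-1), P = 1-s
      have hP : β * (1-(s:ℝ)) = -1 := by
        rw [hv] at hβα
        field_simp at hβα ⊢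
        linarith
      have T := alg2 ((d:ℝ)+1) (k:ℝ) (cval d k β) β (1-(s:ℝ)) hN0 hNc hE hP
      refine ⟨castgoal k (d+1-k) (1-(s:ℤ)) hk1 (by omega) (Or.inr rfl) (by omega) ?_, ?_⟩
      · push_cast [Nat.cast_sub hkd1]
        push_cast at T ⊢
        linear_combination T
      · right; right; left
        field_simp
        linarith [hP]
  · exact absurd (by linarith : (2:ℝ)*β = 0) (by simpa using hβ0)
theorem stmt4 (s : ℕ) (hs : 2 ≤ s) :
    {p : ℕ × ℕ × ℝ | 2 ≤ p.1 ∧ 1 ≤ p.2.1 ∧ p.2.1 ≤ p.1 + 1 ∧ p.2.2 ≠ 0 ∧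
      ∃ x ∈ Tset p.1 p.2.1 p.2.2, ∃ α : ℝ,
        distSet (simplex p.1 ∪ {x}) = {Real.sqrt 2, Real.sqrt α} ∧
        (α/2 = ((s:ℝ)-1)/(s:ℝ) ∨ 2/α = ((s:ℝ)-1)/(s:ℝ))}.Finite := by
  have hB : ({((s:ℝ))⁻¹, -((s:ℝ))⁻¹, ((s:ℝ)-1)⁻¹, -((s:ℝ)-1)⁻¹} : Set ℝ).Finite :=
    (Set.finite_singleton _).insert _ |>.insert _ |>.insert _
  apply Set.Finite.subset
    (Set.Finite.prod (Set.finite_Iic (4*s^4))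
      (Set.Finite.prod (Set.finite_Iic (4*s^4+1)) hB))
  rintro ⟨d, k, β⟩ ⟨hd2, hk1, hkd1, hβ0, x, hx, α, hdist, hα⟩
  obtain ⟨hdle, hβval⟩ := mainBound s d k β α x hs hd2 hk1 hkd1 hβ0 hx hdist hα
  refine ⟨hdle, Nat.le_trans hkd1 (Nat.add_le_add_right hdle 1), ?_⟩
  simpa using hβval
end
end

section
/- Let s ≥ 2 be an integer and k a real number. (1) If k ≠ s², define d(k) = k + s² − 2s − 1 + s²(s−1)²/(k − s²) and k' = s²(s−1)²/(k − s²) + s²; then d(k') = d(k). (2) If k ≠ (s−1)², define d(k) = k + s² − 2 + s²(s−1)²/(k − (s−1)²) and k' = s²(s−1)²/(k − (s−1)²) + (s−1)²; then d(k') = d(k). -/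
noncomputable section

open scoped BigOperators Classical

theorem stmt7 (s : ℕ) (hs : 2 ≤ s) (k : ℝ) :
    (k ≠ (s:ℝ)^2 →
      ((s:ℝ)^2*((s:ℝ)-1)^2/(k-(s:ℝ)^2) + (s:ℝ)^2) + (s:ℝ)^2 - 2*(s:ℝ) - 1 +
          (s:ℝ)^2*((s:ℝ)-1)^2/(((s:ℝ)^2*((s:ℝ)-1)^2/(k-(s:ℝ)^2) + (s:ℝ)^2) - (s:ℝ)^2)
        = k + (s:ℝ)^2 - 2*(s:ℝ) - 1 + (s:ℝ)^2*((s:ℝ)-1)^2/(k-(s:ℝ)^2)) ∧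
    (k ≠ ((s:ℝ)-1)^2 →
      ((s:ℝ)^2*((s:ℝ)-1)^2/(k-((s:ℝ)-1)^2) + ((s:ℝ)-1)^2) + (s:ℝ)^2 - 2 +
          (s:ℝ)^2*((s:ℝ)-1)^2/(((s:ℝ)^2*((s:ℝ)-1)^2/(k-((s:ℝ)-1)^2) + ((s:ℝ)-1)^2) - ((s:ℝ)-1)^2)
        = k + (s:ℝ)^2 - 2 + (s:ℝ)^2*((s:ℝ)-1)^2/(k-((s:ℝ)-1)^2)) := by
  have hs' : (2:ℝ) ≤ (s:ℝ) := by exact_mod_cast hs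
  have hA : (s:ℝ)^2*((s:ℝ)-1)^2 ≠ 0 := mul_ne_zero (pow_ne_zero _ (by linarith)) (pow_ne_zero _ (by linarith))
  constructor
  · intro h
    have hx : k - (s:ℝ)^2 ≠ 0 := sub_ne_zero.mpr h
    rw [add_sub_cancel_right, div_div_cancel₀ hA]
    ring
  · intro h
    have hx : k - ((s:ℝ)-1)^2 ≠ 0 := sub_ne_zero.mpr h
    rw [add_sub_cancel_right, div_div_cancel₀ hA]
    ring
end
end

section
/- Let s ≥ 2 be an integer, and let a, b be non-negative integers with a − b = s and b < s. Let P be a set of s³ points and let 𝔅 be a family of s²-element subsets (blocks) of P such that: every 2-element subset of P is contained in exactly s+1 blocks; |B₁ ∩ B₂| ∈ {0, s} for all distinct B₁, B₂ ∈ 𝔅; and there exist s pairwise disjoint blocks in 𝔅 whose union is P. Then there does not exist a non-empty subset S of P such that |S ∩ B| ∈ {a, b} for every block B ∈ 𝔅. -/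
private lemma double_count' {P : Type*} [DecidableEq P] (F : Finset (Finset P)) (S : Finset P) :
    ∑ B ∈ F, (S ∩ B).card = ∑ q ∈ S, (F.filter (fun B => q ∈ B)).card := by
  simp_rw [← Finset.filter_mem_eq_inter, Finset.card_filter]
  exact Finset.sum_comm

/-- **Lemma.** Let `s ≥ 2` and `a - b = s`, `b < s`. In a strongly resolvable
`2-(s³, s², s+1)` design `(P, 𝔅)` (every pair of points in exactly `s+1` blocks, any two
distinct blocks meeting in `0` or `s` points, and containing a parallel class of `s`
pairwise disjoint blocks partitioning `P`), there is no non-empty subset `S ⊆ P` with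
`|S ∩ B| ∈ {a, b}` for every block `B`. -/
theorem stmt11 (s : ℕ) (hs : 2 ≤ s) (a b : ℕ) (hab : (a : ℤ) - (b : ℤ) = (s : ℤ))
    (hb : b < s)
    (P : Type*) [Fintype P] [DecidableEq P] (hP : Fintype.card P = s ^ 3)
    (𝔅 : Finset (Finset P))
    (hblock : ∀ B ∈ 𝔅, B.card = s ^ 2)
    (hpair : ∀ p q : P, p ≠ q →
      (𝔅.filter (fun B => p ∈ B ∧ q ∈ B)).card = s + 1)
    (hqs : ∀ B₁ ∈ 𝔅, ∀ B₂ ∈ 𝔅, B₁ ≠ B₂ →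
      (B₁ ∩ B₂).card = 0 ∨ (B₁ ∩ B₂).card = s)
    (hres : ∃ C : Finset (Finset P), C ⊆ 𝔅 ∧ C.card = s ∧
      (∀ B₁ ∈ C, ∀ B₂ ∈ C, B₁ ≠ B₂ → Disjoint B₁ B₂) ∧ C.sup id = Finset.univ) :
    ¬ ∃ S : Finset P, S.Nonempty ∧
      ∀ B ∈ 𝔅, (S ∩ B).card = a ∨ (S ∩ B).card = b := by
  rintro ⟨S, hSne, hS⟩
  obtain ⟨p, hp⟩ := hSne
  haveI : NeZero s := ⟨by omega⟩
  have habn : a = b + s := by omega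
  set F := 𝔅.filter (fun B => p ∈ B) with hF
  have hFsub : F ⊆ 𝔅 := Finset.filter_subset _ _
  -- Count blocks through p
  have hdc1 := double_count' F (Finset.univ.erase p)
  have hL1 : ∑ B ∈ F, ((Finset.univ.erase p) ∩ B).card = F.card * (s ^ 2 - 1) := by
    rw [Finset.sum_congr rfl (fun B hB => ?_), Finset.sum_const, smul_eq_mul]
    have hpB : p ∈ B := (Finset.mem_filter.mp hB).2
    have hEq : (Finset.univ.erase p) ∩ B = B.erase p := by
      ext q; simp [Finset.mem_erase, and_comm]
    rw [hEq, Finset.card_erase_of_mem hpB, hblock B (hFsub hB)]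
  have hR1 : ∑ q ∈ Finset.univ.erase p, (F.filter (fun B => q ∈ B)).card
      = (s ^ 3 - 1) * (s + 1) := by
    rw [Finset.sum_congr rfl (fun q hq => ?_), Finset.sum_const, smul_eq_mul,
      Finset.card_erase_of_mem (Finset.mem_univ p), Finset.card_univ, hP]
    have hqp : q ≠ p := (Finset.mem_erase.mp hq).1
    rw [hF, Finset.filter_filter]
    exact hpair p q hqp.symm
  have hr : F.card * (s ^ 2 - 1) = (s ^ 3 - 1) * (s + 1) := by rw [← hL1, hdc1, hR1]
  have h1 : 1 ≤ s ^ 2 := Nat.one_le_pow _ _ (by omega)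
  have h3 : 1 ≤ s ^ 3 := Nat.one_le_pow _ _ (by omega)
  have hrcard : F.card = s ^ 2 + s + 1 := by
    zify [h1, h3] at hr
    have hsz : (2 : ℤ) ≤ (s : ℤ) := by exact_mod_cast hs
    have hne : ((s : ℤ) ^ 2 - 1) ≠ 0 := by nlinarith
    have key : (F.card : ℤ) * ((s : ℤ) ^ 2 - 1)
        = ((s : ℤ) ^ 2 + s + 1) * ((s : ℤ) ^ 2 - 1) := by rw [hr]; ring
    have := mul_right_cancel₀ hne key
    exact_mod_cast this
  -- Count incidences of S with blocks through p
  have hdc2 := double_count' F S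
  have hR2 : ∑ q ∈ S, (F.filter (fun B => q ∈ B)).card
      = F.card + (S.erase p).card * (s + 1) := by
    rw [← Finset.add_sum_erase S _ hp]
    congr 1
    · simp [hF, Finset.filter_filter]
    · rw [Finset.sum_congr rfl (fun q hq => ?_), Finset.sum_const, smul_eq_mul]
      have hqp : q ≠ p := (Finset.mem_erase.mp hq).1
      rw [hF, Finset.filter_filter]
      exact hpair p q hqp.symm
  have key2 : ∑ B ∈ F, (S ∩ B).card = F.card + (S.erase p).card * (s + 1) :=
    hdc2.trans hR2
  -- Parallel class: s ∣ |S|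
  obtain ⟨C, hC𝔅, hCcard, hCdisj, hCsup⟩ := hres
  have hdisj : ∀ B₁ ∈ C, ∀ B₂ ∈ C, B₁ ≠ B₂ → Disjoint (S ∩ B₁) (S ∩ B₂) := by
    intro B₁ h1' B₂ h2' hne
    exact Finset.disjoint_of_subset_left Finset.inter_subset_right
      (Finset.disjoint_of_subset_right Finset.inter_subset_right (hCdisj B₁ h1' B₂ h2' hne))
  have hScard : ∑ B ∈ C, (S ∩ B).card = S.card := by
    rw [← Finset.card_biUnion hdisj]
    congr 1
    ext q
    simp only [Finset.mem_biUnion, Finset.mem_inter]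
    constructor
    · rintro ⟨B, _, hq, _⟩; exact hq
    · intro hq
      have hmem : q ∈ C.sup id := hCsup ▸ Finset.mem_univ q
      obtain ⟨B, hB, hqB⟩ := Finset.mem_sup.mp hmem
      exact ⟨B, hB, hq, hqB⟩
  -- reduction mod s
  have hxb : ∀ B ∈ 𝔅, (((S ∩ B).card : ℕ) : ZMod s) = (b : ZMod s) := by
    intro B hB
    rcases hS B hB with h | h
    · rw [h, habn]; push_cast; simp
    · rw [h]
  have hn0 : ((S.card : ℕ) : ZMod s) = 0 := by
    rw [← hScard]
    push_cast
    rw [Finset.sum_congr rfl (fun B hB => hxb B (hC𝔅 hB)), Finset.sum_const, hCcard]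
    simp [nsmul_eq_mul]
  have he1 : (S.erase p).card + 1 = S.card := Finset.card_erase_add_one hp
  have hnb : ((S.card : ℕ) : ZMod s) = (b : ZMod s) := by
    have hkey := congrArg (Nat.cast : ℕ → ZMod s) key2
    push_cast at hkey
    rw [Finset.sum_congr rfl (fun B hB => hxb B (hFsub hB)), Finset.sum_const,
      nsmul_eq_mul, hrcard] at hkey
    -- hkey : (↑(s^2+s+1)) * b = ↑F.card + e * (s+1) in ZMod s
    rw [← he1]
    push_cast at hkey ⊢
    simp only [ZMod.natCast_self] at hkey ⊢
    linear_combination -hkey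
  have hb0 : b = 0 := by
    have hbz : (b : ZMod s) = 0 := hnb.symm.trans hn0
    exact Nat.eq_zero_of_dvd_of_lt ((ZMod.natCast_eq_zero_iff b s).mp hbz) hb
  have has : a = s := by omega
  -- every block through p meets S in exactly s points
  have hall : ∀ B ∈ F, (S ∩ B).card = s := by
    intro B hB
    rcases hS B (hFsub hB) with h | h
    · rw [h, has]
    · exfalso
      have hmem : p ∈ S ∩ B := Finset.mem_inter.mpr ⟨hp, (Finset.mem_filter.mp hB).2⟩
      rw [hb0, Finset.card_eq_zero] at h
      rw [h] at hmem
      exact Finset.notMem_empty p hmem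
  have key3 : F.card * s = F.card + (S.erase p).card * (s + 1) := by
    rw [← key2, Finset.sum_congr rfl hall, Finset.sum_const, smul_eq_mul]
  have hsz : (2 : ℤ) ≤ (s : ℤ) := by exact_mod_cast hs
  have hz : ((s : ℤ) + 1) * ((s : ℤ) ^ 2 - s + 1 - (S.erase p).card) = 2 := by
    have hkey := congrArg (Nat.cast : ℕ → ℤ) key3
    rw [hrcard] at hkey
    push_cast at hkey
    linear_combination hkey
  have hdvd : ((s : ℤ) + 1) ∣ 2 := ⟨_, hz.symm⟩
  have hle := Int.le_of_dvd (by norm_num) hdvd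
  omega
end
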